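/- arXiv:1112.1413 — 5 statements merged into one kernel-verified Lean document; each statement's English description precedes it below -/
import Mathlib

section
/- (Existence part of the constructive commutative QLLL.) Let Π₁, Π₂, …, Π_m be mutually commuting projectors on the Hilbert space of n qudits of local dimension d, where each Πᵢ acts non-trivially only on a subset [i] of the qudits. If the projectors satisfy the Lovász conditions, then there exists a density matrix ρ on the n-qudit space such that tr(Πᵢ ρ) = 0 for every i; equivalently, there exists a nonzero vector ψ with Πᵢ ψ = 0 for all i. -/
/-!
Put `K_T = ∏_{j ∈ T} (1 - Πⱼ)`. Since the `Πⱼ` commute, every `K_T` and `Πᵢ K_T` is a projector,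
so `μ T = tr K_T` and `ν i T = tr (Πᵢ K_T)` are nonnegative and behave like the probabilities
`Pr(no Aⱼ, j ∈ T)` and `Pr(Aᵢ and no Aⱼ, j ∈ T)`: adding `i` to `T` lowers `μ` by `ν i T`,
and `ν i` decreases as `T` grows. Independence comes from locality: if `Πᵢ` acts on qudits
disjoint from those of `K_T`, the trace factorises as `dⁿ tr (Πᵢ K_T) = tr Πᵢ · tr K_T`,
i.e. `ν i T = R(Πᵢ) μ T`. The inductive proof of the classical Lovász local lemma then gives
`tr K ≥ dⁿ ∏ᵢ (1 - xᵢ) > 0` for the full product `K`, which kills every `Πᵢ`; hence `K / tr K`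
is the required density matrix and any nonzero vector in the range of `K` the required `ψ`.
-/

open scoped Classical ComplexOrder

/-- A matrix on the Hilbert space of `n` qudits of local dimension `d`
(indexed by functions `Fin n → Fin d`) acts non-trivially only on the subset
`S` of the qudits: its entries vanish off the "diagonal" outside `S`, and
depend only on the restrictions of the indices to `S`. -/
def ActsOnlyOn {n d : ℕ} (A : Matrix (Fin n → Fin d) (Fin n → Fin d) ℂ)
    (S : Finset (Fin n)) : Prop :=
  (∀ x y : Fin n → Fin d, (∃ c, c ∉ S ∧ x c ≠ y c) → A x y = 0) ∧
  (∀ x y x' y' : Fin n → Fin d,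
      (∀ c ∈ S, x c = x' c) → (∀ c ∈ S, y c = y' c) →
      (∀ c ∉ S, x c = y c) → (∀ c ∉ S, x' c = y' c) →
      A x y = A x' y')

open Finset Matrix

section LovaszLocalLemma

variable {ι : Type*} [DecidableEq ι]

/-- `μ T` plays the role of the probability that no event indexed by `T` occurs, `ν i T` that of
the probability that `Aᵢ` occurs but none of the events indexed by `T`, `Γ i` is the dependency
neighbourhood of `Aᵢ`, and `p i` bounds the probability of `Aᵢ` given that no event independent
of it occurs. -/
structure IsLovaszWeight (μ : Finset ι → ℝ) (ν : ι → Finset ι → ℝ) (Γ : ι → Finset ι)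
    (p : ι → ℝ) : Prop where
  nonneg : ∀ T, 0 ≤ μ T
  insert_eq : ∀ i T, i ∉ T → μ (insert i T) = μ T - ν i T
  antitone : ∀ i, Antitone (ν i)
  le_of_disjoint : ∀ i T, i ∉ T → Disjoint T (Γ i) → ν i T ≤ p i * μ T

theorem prod_one_sub_mul_le_union {μ : Finset ι → ℝ} {x : ι → ℝ} {A B : Finset ι}
    (hx : ∀ j ∈ B, x j ≤ 1) (hAB : Disjoint A B)
    (hstep : ∀ C ⊆ B, ∀ j ∈ B, j ∉ A ∪ C → (1 - x j) * μ (A ∪ C) ≤ μ (insert j (A ∪ C))) :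
    (∏ j ∈ B, (1 - x j)) * μ A ≤ μ (A ∪ B) := by
  induction B using Finset.induction_on with
  | empty => simp
  | @insert j B hjB ih =>
    have hjA : j ∉ A := disjoint_right.1 hAB (mem_insert_self j B)
    have hB : (∏ k ∈ B, (1 - x k)) * μ A ≤ μ (A ∪ B) :=
      ih (fun k hk => hx k (mem_insert_of_mem hk)) (hAB.mono_right (subset_insert j B))
        fun C hC k hk => hstep C (hC.trans (subset_insert j B)) k (mem_insert_of_mem hk)
    rw [prod_insert hjB, union_insert, mul_assoc]
    calc (1 - x j) * ((∏ k ∈ B, (1 - x k)) * μ A)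
        ≤ (1 - x j) * μ (A ∪ B) :=
          mul_le_mul_of_nonneg_left hB (sub_nonneg.2 (hx j (mem_insert_self j B)))
      _ ≤ μ (insert j (A ∪ B)) :=
          hstep B (subset_insert j B) j (mem_insert_self j B) (by simp [hjA, hjB])

namespace IsLovaszWeight

variable {μ : Finset ι → ℝ} {ν : ι → Finset ι → ℝ} {Γ : ι → Finset ι} {p x : ι → ℝ}

theorem le_mul (h : IsLovaszWeight μ ν Γ p) (hp : ∀ i, p i ≤ x i * ∏ j ∈ Γ i, (1 - x j))
    (hx0 : ∀ i, 0 ≤ x i) (hx1 : ∀ i, x i ≤ 1) {i : ι} {T : Finset ι} (hiT : i ∉ T) :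
    ν i T ≤ x i * μ T := by
  induction T using Finset.strongInduction generalizing i with
  | H T ih =>
    set F := T.filter (· ∉ Γ i)
    set N := T.filter (· ∈ Γ i)
    have hFN : F ∪ N = T := by rw [union_comm]; exact filter_union_filter_not_eq _ _
    have hstep : ∀ C ⊆ N, ∀ j ∈ N, j ∉ F ∪ C →
        (1 - x j) * μ (F ∪ C) ≤ μ (insert j (F ∪ C)) := by
      intro C hC j hj hjFC
      have hlt : F ∪ C ⊂ T := Finset.ssubset_iff_subset_ne.2
        ⟨union_subset (filter_subset _ _) (hC.trans (filter_subset _ _)),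
          fun hT => hjFC (hT ▸ (mem_filter.1 hj).1)⟩
      rw [h.insert_eq j _ hjFC]
      linarith [ih _ hlt hjFC]
    have hN : ∏ j ∈ Γ i, (1 - x j) ≤ ∏ j ∈ N, (1 - x j) :=
      prod_le_prod_of_subset_of_le_one (fun j hj => (mem_filter.1 hj).2)
        (fun j _ => sub_nonneg.2 (hx1 j)) (fun j _ _ => by linarith [hx0 j])
    calc ν i T ≤ ν i F := h.antitone i (filter_subset _ _)
      _ ≤ p i * μ F := h.le_of_disjoint i F (fun hi => hiT (mem_filter.1 hi).1)
          (disjoint_left.2 fun j hj => (mem_filter.1 hj).2)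
      _ ≤ x i * ((∏ j ∈ N, (1 - x j)) * μ F) := by
          rw [← mul_assoc]
          exact mul_le_mul_of_nonneg_right
            ((hp i).trans (mul_le_mul_of_nonneg_left hN (hx0 i))) (h.nonneg F)
      _ ≤ x i * μ T := by
          rw [← hFN]
          exact mul_le_mul_of_nonneg_left (prod_one_sub_mul_le_union
            (fun j _ => hx1 j) (disjoint_filter_filter_not T T _).symm hstep) (hx0 i)

theorem prod_one_sub_mul_le (h : IsLovaszWeight μ ν Γ p)
    (hp : ∀ i, p i ≤ x i * ∏ j ∈ Γ i, (1 - x j)) (hx0 : ∀ i, 0 ≤ x i) (hx1 : ∀ i, x i ≤ 1)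
    (T : Finset ι) : (∏ j ∈ T, (1 - x j)) * μ ∅ ≤ μ T := by
  simpa using prod_one_sub_mul_le_union (A := ∅) (fun j _ => hx1 j) (disjoint_empty_left T)
    fun C _ j _ hj => by
      rw [h.insert_eq j _ hj]
      linarith [h.le_mul hp hx0 hx1 hj]

end IsLovaszWeight

end LovaszLocalLemma

theorem Matrix.trace_eq_rank_of_isIdempotentElem {N K : Type*} [Fintype N] [DecidableEq N]
    [Field K] {A : Matrix N N K} (hA : IsIdempotentElem A) : A.trace = A.rank := by
  have hA' : IsIdempotentElem A.toLin' := hA.map Matrix.toLinAlgEquiv'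
  rw [← trace_toLin'_eq, (LinearMap.IsIdempotentElem.isProj_range _ hA').trace, rank,
    toLin'_apply']

theorem Matrix.re_trace_nonneg_of_isIdempotentElem {N : Type*} [Fintype N] [DecidableEq N]
    {A : Matrix N N ℂ} (hA : IsIdempotentElem A) : 0 ≤ A.trace.re := by
  rw [trace_eq_rank_of_isIdempotentElem hA, Complex.natCast_re]
  exact Nat.cast_nonneg _

theorem IsStarProjection.posSemidef {N : Type*} [Fintype N] {A : Matrix N N ℂ}
    (hA : IsStarProjection A) : A.PosSemidef := by
  have h : Aᴴ * A = A := by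
    rw [← star_eq_conjTranspose, hA.isSelfAdjoint.star_eq, hA.isIdempotentElem.eq]
  exact h ▸ posSemidef_conjTranspose_mul_self A

section CommutingProjectors

variable {N ι : Type*} [Fintype N] [DecidableEq N]
  (P : ι → Matrix N N ℂ) (hc : ∀ i j, Commute (P i) (P j))

noncomputable def prodOneSub (T : Finset ι) : Matrix N N ℂ :=
  T.noncommProd (fun j => 1 - P j)
    fun a _ b _ _ => (Commute.one_left _).sub_left ((Commute.one_right _).sub_right (hc a b))

theorem prodOneSub_empty : prodOneSub P hc ∅ = 1 := noncommProd_empty _ _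

theorem commute_prodOneSub (i : ι) (T : Finset ι) : Commute (P i) (prodOneSub P hc T) :=
  noncommProd_commute _ _ _ _ fun j _ => (Commute.one_right _).sub_right (hc i j)

variable [DecidableEq ι]

theorem prodOneSub_insert {i : ι} {T : Finset ι} (h : i ∉ T) :
    prodOneSub P hc (insert i T) = (1 - P i) * prodOneSub P hc T :=
  noncommProd_insert_of_notMem _ _ _ _ h

theorem isStarProjection_prodOneSub (hP : ∀ i, IsStarProjection (P i)) (T : Finset ι) :
    IsStarProjection (prodOneSub P hc T) := by
  induction T using Finset.induction_on with
  | empty => rw [prodOneSub_empty]; exact IsStarProjection.one _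
  | @insert i T hiT ih =>
    rw [prodOneSub_insert P hc hiT]
    exact (hP i).one_sub.mul ih ((Commute.one_left _).sub_left (commute_prodOneSub P hc i T))

theorem mul_prodOneSub_eq_zero (hP : ∀ i, IsStarProjection (P i)) {i : ι} {T : Finset ι}
    (hi : i ∈ T) : P i * prodOneSub P hc T = 0 := by
  rw [← insert_erase hi, prodOneSub_insert P hc (notMem_erase i T), ← mul_assoc,
    (hP i).mul_one_sub_self, zero_mul]

theorem trace_prodOneSub_insert {i : ι} {T : Finset ι} (h : i ∉ T) :
    (prodOneSub P hc (insert i T)).trace =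
      (prodOneSub P hc T).trace - (P i * prodOneSub P hc T).trace := by
  rw [prodOneSub_insert P hc h, sub_mul, one_mul, trace_sub]

theorem antitone_re_trace_mul_prodOneSub (hP : ∀ i, IsStarProjection (P i)) (i : ι) :
    Antitone fun T => (P i * prodOneSub P hc T).trace.re := by
  refine Finset.antitone_iff_forall_insert_le.2 fun T j hj => ?_
  have hPj : IsStarProjection (P i * P j * prodOneSub P hc T) :=
    ((hP i).mul (hP j) (hc i j)).mul (isStarProjection_prodOneSub P hc hP T)
      ((commute_prodOneSub P hc i T).mul_left (commute_prodOneSub P hc j T))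
  rw [prodOneSub_insert P hc hj, ← mul_assoc, mul_sub, mul_one, sub_mul, trace_sub,
    Complex.sub_re]
  linarith [re_trace_nonneg_of_isIdempotentElem hPj.isIdempotentElem]

end CommutingProjectors

section Locality

variable {n d : ℕ} {A B : Matrix (Fin n → Fin d) (Fin n → Fin d) ℂ} {S T : Finset (Fin n)}
  {σ : Fin n → Equiv.Perm (Fin d)}

def permOutside (S : Finset (Fin n)) (σ : Fin n → Equiv.Perm (Fin d)) :
    Equiv.Perm (Fin n → Fin d) :=
  Equiv.piCongrRight fun c => if c ∈ S then 1 else σ c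

theorem permOutside_apply (x : Fin n → Fin d) (c : Fin n) :
    permOutside S σ x c = if c ∈ S then x c else σ c (x c) := by
  unfold permOutside
  split_ifs <;> simp [*]

theorem permOutside_union :
    permOutside (S ∪ T) σ = permOutside S fun c => if c ∈ T then 1 else σ c := by
  ext x c
  simp only [permOutside_apply, mem_union]
  split_ifs <;> simp_all

theorem actsOnlyOn_iff_permOutside :
    ActsOnlyOn A S ↔ (∀ x y : Fin n → Fin d, (∃ c, c ∉ S ∧ x c ≠ y c) → A x y = 0) ∧
      ∀ σ x y, A (permOutside S σ x) (permOutside S σ y) = A x y := by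
  unfold ActsOnlyOn
  refine and_congr_right fun h0 => ⟨fun h σ x y => ?_, fun h x y x' y' hx hy hxy hxy' => ?_⟩
  · by_cases hxy : ∀ c ∉ S, x c = y c
    · exact (h x y _ _ (fun c hc => by simp [permOutside_apply, hc])
        (fun c hc => by simp [permOutside_apply, hc]) hxy
        (fun c hc => by simp [permOutside_apply, hc, hxy c hc])).symm
    · obtain ⟨c, hc, hne⟩ := not_forall₂.1 hxy
      rw [h0 x y ⟨c, hc, hne⟩, h0 _ _ ⟨c, hc, by simpa [permOutside_apply, hc] using hne⟩]
  · set τ := permOutside S fun c => Equiv.swap (x c) (x' c)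
    have hτx : τ x = x' := by
      funext c
      by_cases hc : c ∈ S <;> simp [τ, permOutside_apply, hc, hx]
    have hτy : τ y = y' := by
      funext c
      by_cases hc : c ∈ S
      · simp [τ, permOutside_apply, hc, hy]
      · simp [τ, permOutside_apply, hc, ← hxy c hc, hxy' c hc]
    rw [← hτx, ← hτy, h]

theorem actsOnlyOn_one : ActsOnlyOn (1 : Matrix (Fin n → Fin d) (Fin n → Fin d) ℂ) S := by
  refine actsOnlyOn_iff_permOutside.2
    ⟨fun x y ⟨c, _, hc⟩ => one_apply_ne fun h => hc (h ▸ rfl), fun σ x y => ?_⟩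
  simp only [one_apply, (permOutside S σ).injective.eq_iff]

theorem ActsOnlyOn.sub (hA : ActsOnlyOn A S) (hB : ActsOnlyOn B S) : ActsOnlyOn (A - B) S :=
  ⟨fun x y h => by simp [hA.1 x y h, hB.1 x y h],
    fun x y x' y' h₁ h₂ h₃ h₄ => by
      simp [hA.2 x y x' y' h₁ h₂ h₃ h₄, hB.2 x y x' y' h₁ h₂ h₃ h₄]⟩

theorem ActsOnlyOn.mul (hA : ActsOnlyOn A S) (hB : ActsOnlyOn B T) :
    ActsOnlyOn (A * B) (S ∪ T) := by
  rw [actsOnlyOn_iff_permOutside] at hA hB ⊢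
  refine ⟨fun x y ⟨c, hc, hne⟩ => ?_, fun σ x y => ?_⟩
  · rw [mem_union, not_or] at hc
    refine sum_eq_zero fun z _ => show A x z * B z y = 0 from ?_
    by_cases hz : x c = z c
    · rw [hB.1 z y ⟨c, hc.2, hz ▸ hne⟩, mul_zero]
    · rw [hA.1 x z ⟨c, hc.1, hz⟩, zero_mul]
  · rw [mul_apply, mul_apply, ← Equiv.sum_comp (permOutside (S ∪ T) σ)]
    refine sum_congr rfl fun z _ => ?_
    congr 1
    · rw [permOutside_union, hA.2]
    · rw [union_comm, permOutside_union, hB.2]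

theorem ActsOnlyOn.apply_self_congr (hA : ActsOnlyOn A S) {u v : Fin n → Fin d}
    (h : ∀ c ∈ S, u c = v c) : A u u = A v v :=
  hA.2 u u v v h h (fun _ _ => rfl) (fun _ _ => rfl)

theorem ActsOnlyOn.mul_apply_self (hA : ActsOnlyOn A S) (hB : ActsOnlyOn B T)
    (hST : Disjoint S T) (w : Fin n → Fin d) : (A * B) w w = A w w * B w w := by
  rw [mul_apply]
  refine sum_eq_single w (fun z _ hzw => ?_) (by simp)
  obtain ⟨c, hc⟩ : ∃ c, w c ≠ z c := by
    by_contra! h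
    exact hzw (funext fun c => (h c).symm)
  by_cases hcS : c ∈ S
  · rw [hB.1 z w ⟨c, disjoint_left.1 hST hcS, Ne.symm hc⟩, mul_zero]
  · rw [hA.1 w z ⟨c, hcS, hc⟩, zero_mul]

theorem ActsOnlyOn.trace_mul_trace (hA : ActsOnlyOn A S) (hB : ActsOnlyOn B T)
    (hST : Disjoint S T) : A.trace * B.trace = (d : ℂ) ^ n * (A * B).trace := by
  -- exchanging the `S`-coordinates of `u` and `v` changes neither `A u u` nor `B v v`
  let e : Equiv.Perm ((Fin n → Fin d) × (Fin n → Fin d)) :=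
    Function.Involutive.toPerm (fun p => (S.piecewise p.1 p.2, S.piecewise p.2 p.1)) <| by
      rintro ⟨u, v⟩
      ext c <;> by_cases hc : c ∈ S <;> simp [hc]
  have he : ∀ p : (Fin n → Fin d) × (Fin n → Fin d),
      A p.1 p.1 * B p.2 p.2 = A (e p).1 (e p).1 * B (e p).1 (e p).1 := by
    rintro ⟨u, v⟩
    congr 1
    · exact hA.apply_self_congr fun c hc => (S.piecewise_eq_of_mem u v hc).symm
    · exact hB.apply_self_congr fun c hc =>
        (S.piecewise_eq_of_notMem u v (disjoint_right.1 hST hc)).symm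
  calc A.trace * B.trace
        = ∑ p : (Fin n → Fin d) × (Fin n → Fin d), A p.1 p.1 * B p.2 p.2 := by
        rw [trace, trace, sum_mul_sum, ← Fintype.sum_prod_type']
        rfl
    _ = ∑ p : (Fin n → Fin d) × (Fin n → Fin d), A (e p).1 (e p).1 * B (e p).1 (e p).1 :=
        Fintype.sum_congr _ _ he
    _ = ∑ p : (Fin n → Fin d) × (Fin n → Fin d), A p.1 p.1 * B p.1 p.1 :=
        Equiv.sum_comp e fun p => A p.1 p.1 * B p.1 p.1
    _ = (d : ℂ) ^ n * (A * B).trace := by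
        simp [Fintype.sum_prod_type, trace, hA.mul_apply_self hB hST, mul_sum]

end Locality

section CommutingLocalProjectors

variable {n d : ℕ} {ι : Type*} [DecidableEq ι]
  {P : ι → Matrix (Fin n → Fin d) (Fin n → Fin d) ℂ} (hc : ∀ i j, Commute (P i) (P j))
  {S : ι → Finset (Fin n)}

theorem actsOnlyOn_prodOneSub (hloc : ∀ i, ActsOnlyOn (P i) (S i)) (T : Finset ι) :
    ActsOnlyOn (prodOneSub P hc T) (T.biUnion S) := by
  induction T using Finset.induction_on with
  | empty => rw [prodOneSub_empty]; exact actsOnlyOn_one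
  | @insert i T hiT ih =>
    rw [prodOneSub_insert P hc hiT, biUnion_insert]
    exact (actsOnlyOn_one.sub (hloc i)).mul ih

theorem isLovaszWeight_re_trace_prodOneSub [Fintype ι] (hd : d ≠ 0)
    (hP : ∀ i, IsStarProjection (P i)) (hloc : ∀ i, ActsOnlyOn (P i) (S i)) :
    IsLovaszWeight (fun T => (prodOneSub P hc T).trace.re)
      (fun i T => (P i * prodOneSub P hc T).trace.re)
      (fun i => univ.filter fun j => j ≠ i ∧ (S i ∩ S j).Nonempty)
      (fun i => (P i).rank / (d : ℝ) ^ n) where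
  nonneg T :=
    re_trace_nonneg_of_isIdempotentElem (isStarProjection_prodOneSub P hc hP T).isIdempotentElem
  insert_eq i T h := by
    simp only [trace_prodOneSub_insert P hc h, Complex.sub_re]
  antitone := antitone_re_trace_mul_prodOneSub P hc hP
  le_of_disjoint i T hiT hT := by
    have hK := isStarProjection_prodOneSub P hc hP T
    have hPK := (hP i).mul hK (commute_prodOneSub P hc i T)
    have hST : Disjoint (S i) (T.biUnion S) := by
      refine (disjoint_biUnion_right _ _ _).2 fun j hj => disjoint_iff_inter_eq_empty.2 ?_
      by_contra hne
      exact disjoint_left.1 hT hj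
        (mem_filter.2 ⟨mem_univ j, fun h => hiT (h ▸ hj), nonempty_iff_ne_empty.2 hne⟩)
    have h := (hloc i).trace_mul_trace (actsOnlyOn_prodOneSub hc hloc T) hST
    rw [trace_eq_rank_of_isIdempotentElem (hP i).isIdempotentElem,
      trace_eq_rank_of_isIdempotentElem hK.isIdempotentElem,
      trace_eq_rank_of_isIdempotentElem hPK.isIdempotentElem] at h
    have h' : ((P i).rank : ℝ) * (prodOneSub P hc T).rank =
        (d : ℝ) ^ n * (P i * prodOneSub P hc T).rank := by
      exact_mod_cast h
    simp only [trace_eq_rank_of_isIdempotentElem hK.isIdempotentElem,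
      trace_eq_rank_of_isIdempotentElem hPK.isIdempotentElem, Complex.natCast_re]
    rw [div_mul_eq_mul_div, le_div_iff₀ (by positivity), h', mul_comm]

end CommutingLocalProjectors

theorem IsStarProjection.exists_density_matrix {N : Type*} [Fintype N]
    {K : Matrix N N ℂ} (hK : IsStarProjection K) (htr : K.trace ≠ 0) :
    ∃ ρ : Matrix N N ℂ,
      ρ.PosSemidef ∧ ρ.trace = 1 ∧ ∀ A : Matrix N N ℂ, A * K = 0 → A * ρ = 0 := by
  classical
  refine ⟨K.trace⁻¹ • K, hK.posSemidef.smul ?_, ?_,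
    fun A hA => by rw [Matrix.mul_smul, hA, smul_zero]⟩
  · rw [trace_eq_rank_of_isIdempotentElem hK.isIdempotentElem]
    positivity
  · rw [trace_smul, smul_eq_mul, inv_mul_cancel₀ htr]

theorem Matrix.exists_ne_zero_forall_mulVec_eq_zero {N R : Type*} [Fintype N] [Semiring R]
    {K : Matrix N N R} (hK : K ≠ 0) :
    ∃ ψ : N → R, ψ ≠ 0 ∧ ∀ A : Matrix N N R, A * K = 0 → A *ᵥ ψ = 0 := by
  obtain ⟨v, hv⟩ : ∃ v, K *ᵥ v ≠ 0 := by
    by_contra! h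
    exact hK (ext_iff_mulVec.2 fun v => by rw [h v, zero_mulVec])
  exact ⟨K *ᵥ v, hv, fun A hA => by rw [mulVec_mulVec, hA, zero_mulVec]⟩

theorem constructive_commutative_qlll_existence_general
    (n d : ℕ) (hd : 2 ≤ d)
    (m : ℕ) (P : Fin m → Matrix (Fin n → Fin d) (Fin n → Fin d) ℂ)
    (S : Fin m → Finset (Fin n))
    (hherm : ∀ i, (P i).IsHermitian)
    (hidem : ∀ i, P i * P i = P i)
    (hcomm : ∀ i j, P i * P j = P j * P i)
    (hloc : ∀ i, ActsOnlyOn (P i) (S i))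
    (x : Fin m → ℝ) (hx0 : ∀ i, 0 ≤ x i) (hx1 : ∀ i, x i < 1)
    (hLov : ∀ i, ((P i).rank : ℝ) / ((d : ℝ) ^ n) ≤
        x i * ∏ j ∈ Finset.univ.filter
          (fun j => j ≠ i ∧ (S i ∩ S j).Nonempty), (1 - x j)) :
    (∃ ρ : Matrix (Fin n → Fin d) (Fin n → Fin d) ℂ,
        ρ.PosSemidef ∧ ρ.trace = 1 ∧ ∀ i, (P i * ρ).trace = 0) ∧
    (∃ ψ : (Fin n → Fin d) → ℂ, ψ ≠ 0 ∧ ∀ i, (P i).mulVec ψ = 0) := by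
  have hc : ∀ i j, Commute (P i) (P j) := hcomm
  have hP : ∀ i, IsStarProjection (P i) := fun i => ⟨hidem i, hherm i⟩
  set K := prodOneSub P hc univ
  have hK : IsStarProjection K := isStarProjection_prodOneSub P hc hP univ
  have hPK : ∀ i, P i * K = 0 := fun i => mul_prodOneSub_eq_zero P hc hP (mem_univ i)
  have htr : 0 < K.trace.re := by
    have hw := isLovaszWeight_re_trace_prodOneSub hc (by omega) hP hloc
    calc 0 < (∏ j, (1 - x j)) * (d : ℝ) ^ n :=
          mul_pos (prod_pos fun j _ => sub_pos.2 (hx1 j)) (by positivity)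
      _ = (∏ j, (1 - x j)) * (prodOneSub P hc ∅).trace.re := by
          rw [prodOneSub_empty, trace_one, Complex.natCast_re]
          simp
      _ ≤ K.trace.re := hw.prod_one_sub_mul_le hLov hx0 (fun i => (hx1 i).le) univ
  have htr0 : K.trace ≠ 0 := fun h => by simp [h] at htr
  obtain ⟨ρ, hρ, hρtr, hρK⟩ := hK.exists_density_matrix htr0
  obtain ⟨ψ, hψ, hψK⟩ :=
    exists_ne_zero_forall_mulVec_eq_zero fun h : K = 0 => htr0 (by simp [h])
  exact ⟨⟨ρ, hρ, hρtr, fun i => by rw [hρK _ (hPK i), trace_zero]⟩,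
    ⟨ψ, hψ, fun i => hψK _ (hPK i)⟩⟩

/-- **Existence part of the constructive commutative QLLL.** Mutually commuting
projectors on `n` qudits satisfying the Lovász conditions admit a density
matrix `ρ` with `tr(Πᵢ ρ) = 0` for all `i`; equivalently, a nonzero vector `ψ`
with `Πᵢ ψ = 0` for all `i`. -/
theorem constructive_commutative_qlll_existence
    (n d : ℕ) (hn : 1 ≤ n) (hd : 2 ≤ d)
    (m : ℕ) (P : Fin m → Matrix (Fin n → Fin d) (Fin n → Fin d) ℂ)
    (S : Fin m → Finset (Fin n))
    (hherm : ∀ i, (P i).IsHermitian)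
    (hidem : ∀ i, P i * P i = P i)
    (hcomm : ∀ i j, P i * P j = P j * P i)
    (hloc : ∀ i, ActsOnlyOn (P i) (S i))
    (x : Fin m → ℝ) (hx0 : ∀ i, 0 ≤ x i) (hx1 : ∀ i, x i < 1)
    (hLov : ∀ i, ((P i).rank : ℝ) / ((d : ℝ) ^ n) ≤
        x i * ∏ j ∈ Finset.univ.filter
          (fun j => j ≠ i ∧ (S i ∩ S j).Nonempty), (1 - x j)) :
    (∃ ρ : Matrix (Fin n → Fin d) (Fin n → Fin d) ℂ,
        ρ.PosSemidef ∧ ρ.trace = 1 ∧ ∀ i, (P i * ρ).trace = 0) ∧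
    (∃ ψ : (Fin n → Fin d) → ℂ, ψ ≠ 0 ∧ ∀ i, (P i).mulVec ψ = 0) :=
  constructive_commutative_qlll_existence_general n d hd m P S hherm hidem hcomm hloc x hx0 hx1 hLov
end

section
/- (Suppression of continuation terms, commuting case.) Let Π₁, …, Π_m be mutually commuting projectors on ℂ^D, let S ⊆ {1,…,m} with |S| = k ≥ 1, and let P = ∏_{i∈S} Πᵢ. Define the linear map M_cont on matrices by M_cont(ρ) = (1/m) Σ_{i=1}^{m} (I−Πᵢ) ρ (I−Πᵢ). Then for every integer t ≥ 0, P · M_cont^t(I/D) · P ≤ ((m−k)/m)ᵗ · (1/D) P in the Loewner order. -/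
/-!
The compressed state `P ρ P` only sees the continuation terms with `i ∉ S`, since `P (I - Πᵢ) = 0`
for `i ∈ S`. Every remaining term `(I - Πᵢ) (P ρ P) (I - Πᵢ)` is bounded by any multiple `a P` that
bounds `P ρ P`, because `a P` commutes with `Πᵢ` and compressing a positive element that commutes
with a projection can only decrease it. So one step of `M_cont` multiplies the bound by
`|Sᶜ| / m = (m - k) / m`, and `P (I / D) P = P / D` starts the induction.
-/

open scoped ComplexOrder

/-- The continuation map `M_cont(ρ) = (1/m) Σᵢ (I−Πᵢ) ρ (I−Πᵢ)`. -/
noncomputable def Mcont {D m : ℕ} (P : Fin m → Matrix (Fin D) (Fin D) ℂ)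
    (ρ : Matrix (Fin D) (Fin D) ℂ) : Matrix (Fin D) (Fin D) ℂ :=
  ((1 : ℂ) / m) • ∑ i, (1 - P i) * ρ * (1 - P i)

open scoped MatrixOrder
open Finset

theorem Finset.noncommProd_mul_of_mem {ι M : Type*} [Monoid M] [DecidableEq ι] {s : Finset ι}
    {f : ι → M} (comm : (s : Set ι).Pairwise (Function.onFun Commute f)) {i : ι} (hi : i ∈ s)
    (hf : IsIdempotentElem (f i)) : s.noncommProd f comm * f i = s.noncommProd f comm := by
  rw [← s.noncommProd_erase_mul hi f comm, mul_assoc, hf.eq]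

theorem isStarProjection_noncommProd {ι R : Type*} [Semiring R] [StarRing R] {p : ι → R}
    (s : Finset ι) (comm : (s : Set ι).Pairwise (Function.onFun Commute p))
    (hp : ∀ i ∈ s, IsStarProjection (p i)) : IsStarProjection (s.noncommProd p comm) := by
  classical
  induction s using Finset.induction_on with
  | empty => simp
  | insert a s ha ih =>
    rw [noncommProd_insert_of_notMem _ _ _ _ ha]
    refine (hp a (mem_insert_self a s)).mul (ih _ fun i hi => hp i (mem_insert_of_mem hi)) ?_
    exact noncommProd_commute _ _ _ _ fun i hi =>
      comm.of_refl (mem_insert_self a s) (mem_insert_of_mem hi)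

section StarOrderedRing

variable {R : Type*} [Ring R] [PartialOrder R] [StarRing R] [StarOrderedRing R]

theorem IsStarProjection.one_sub_conjugate_le {p y : R} (hp : IsStarProjection p) (hy : 0 ≤ y)
    (hpy : Commute p y) : (1 - p) * y * (1 - p) ≤ y := by
  have hpyp : p * y * p = y * p := by rw [hpy.eq, mul_assoc, hp.isIdempotentElem.eq]
  have hcompress : (1 - p) * y * (1 - p) = y - p * y * p :=
    calc (1 - p) * y * (1 - p) = y - p * y - y * p + p * y * p := by noncomm_ring
      _ = y - p * y * p := by rw [hpyp, hpy.eq]; abel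
  rw [hcompress]
  simpa [hp.isSelfAdjoint.star_eq] using star_left_conjugate_nonneg hy p

theorem IsStarProjection.one_sub_conjugate_le_of_le {p x y : R} (hp : IsStarProjection p)
    (hxy : x ≤ y) (hy : 0 ≤ y) (hpy : Commute p y) : (1 - p) * x * (1 - p) ≤ y :=
  (hp.one_sub.isSelfAdjoint.conjugate_le_conjugate hxy).trans (hp.one_sub_conjugate_le hy hpy)

end StarOrderedRing

section Mcont

variable {D m : ℕ} {P : Fin m → Matrix (Fin D) (Fin D) ℂ} {Q : Matrix (Fin D) (Fin D) ℂ}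
  {S : Finset (Fin m)}

theorem conj_mcont_eq (hQ : ∀ i, Commute Q (P i)) (hS : ∀ i ∈ S, Q * P i = Q)
    (ρ : Matrix (Fin D) (Fin D) ℂ) :
    Q * Mcont P ρ * Q = (1 / m : ℝ) • ∑ i ∈ Sᶜ, (1 - P i) * (Q * ρ * Q) * (1 - P i) := by
  have hterm (i) : Q * ((1 - P i) * ρ * (1 - P i)) * Q = (1 - P i) * (Q * ρ * Q) * (1 - P i) := by
    have h := (Commute.one_right Q).sub_right (hQ i)
    simp only [mul_assoc]
    rw [h.left_comm, h.eq]
  have hvanish : ∀ i ∈ S, Q * ((1 - P i) * ρ * (1 - P i)) * Q = 0 := by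
    intro i hi
    have hQi : Q * (1 - P i) = 0 := by rw [mul_sub, mul_one, hS i hi, sub_self]
    simp only [← mul_assoc, hQi, zero_mul]
  rw [Mcont, Matrix.mul_smul, Matrix.smul_mul, mul_sum, sum_mul, ← sum_add_sum_compl S,
    sum_eq_zero hvanish, zero_add, ← Complex.coe_smul]
  push_cast
  exact congrArg _ (sum_congr rfl fun i _ => hterm i)

variable (hP : ∀ i, IsStarProjection (P i)) (hQ : IsStarProjection Q)
  (hQP : ∀ i, Commute Q (P i)) (hS : ∀ i ∈ S, Q * P i = Q)
include hP hQ hQP hS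

theorem conj_mcont_le {ρ : Matrix (Fin D) (Fin D) ℂ} {a : ℝ} (ha : 0 ≤ a)
    (hρ : Q * ρ * Q ≤ a • Q) : Q * Mcont P ρ * Q ≤ (#Sᶜ / m * a) • Q := by
  have haQ : 0 ≤ a • Q := smul_nonneg ha hQ.nonneg
  calc Q * Mcont P ρ * Q = (1 / m : ℝ) • ∑ i ∈ Sᶜ, (1 - P i) * (Q * ρ * Q) * (1 - P i) :=
        conj_mcont_eq hQP hS ρ
    _ ≤ (1 / m : ℝ) • ∑ _i ∈ Sᶜ, a • Q := by
        gcongr with i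
        exact (hP i).one_sub_conjugate_le_of_le hρ haQ ((hQP i).symm.smul_right a)
    _ = (#Sᶜ / m * a) • Q := by
        rw [sum_const, ← Nat.cast_smul_eq_nsmul ℝ, smul_smul, smul_smul]
        ring_nf

theorem conj_mcont_iterate_le {ρ : Matrix (Fin D) (Fin D) ℂ} {a : ℝ} (ha : 0 ≤ a)
    (hρ : Q * ρ * Q ≤ a • Q) (t : ℕ) :
    Q * (Mcont P)^[t] ρ * Q ≤ ((#Sᶜ / m : ℝ) ^ t * a) • Q := by
  induction t with
  | zero => simpa using hρ
  | succ t ih =>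
    rw [Function.iterate_succ_apply', pow_succ', mul_assoc (#Sᶜ / m : ℝ)]
    exact conj_mcont_le hP hQ hQP hS (by positivity) ih

end Mcont

theorem suppression_of_continuation_terms_general
    (D m : ℕ)
    (P : Fin m → Matrix (Fin D) (Fin D) ℂ)
    (hherm : ∀ i, (P i).IsHermitian)
    (hidem : ∀ i, P i * P i = P i)
    (hcomm : ∀ i j, Commute (P i) (P j))
    (S : Finset (Fin m)) (k : ℕ) (hk : S.card = k)
    (t : ℕ) :
    let Pm := S.noncommProd P (fun a _ b _ _ => hcomm a b)
    (((((((m : ℝ) - k) / m) ^ t / D : ℝ)) : ℂ) • Pm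
      - Pm * ((Mcont P)^[t] (((1 : ℂ) / D) • 1)) * Pm).PosSemidef := by
  intro Pm
  have hP (i) : IsStarProjection (P i) := ⟨hidem i, (hherm i).isSelfAdjoint⟩
  have hPm : IsStarProjection Pm := isStarProjection_noncommProd S _ fun i _ => hP i
  have hinit : Pm * ((1 / D : ℂ) • 1) * Pm = (1 / D : ℝ) • Pm := by
    rw [Matrix.mul_smul, mul_one, Matrix.smul_mul, hPm.isIdempotentElem.eq, ← Complex.coe_smul,
      Complex.ofReal_div, Complex.ofReal_one, Complex.ofReal_natCast]
  have hbound := conj_mcont_iterate_le hP hPm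
    (fun i => (noncommProd_commute _ _ _ _ fun j _ => hcomm i j).symm)
    (fun i hi => noncommProd_mul_of_mem _ hi (hP i).isIdempotentElem)
    (by positivity) hinit.le t
  have hkm : k ≤ m := hk ▸ S.card_le_univ.trans_eq (Fintype.card_fin m)
  rw [card_compl, Fintype.card_fin, hk, Nat.cast_sub hkm, ← div_eq_mul_one_div,
    ← Complex.coe_smul] at hbound
  exact Matrix.le_iff.mp hbound

/-- **Suppression of continuation terms, commuting case.**
`P M_contᵗ(I/D) P ≤ ((m−k)/m)ᵗ (1/D) P`, where `P = ∏_{i∈S} Πᵢ`. -/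
theorem suppression_of_continuation_terms
    (D m : ℕ)
    (P : Fin m → Matrix (Fin D) (Fin D) ℂ)
    (hherm : ∀ i, (P i).IsHermitian)
    (hidem : ∀ i, P i * P i = P i)
    (hcomm : ∀ i j, Commute (P i) (P j))
    (S : Finset (Fin m)) (k : ℕ) (hk : S.card = k) (hk1 : 1 ≤ k)
    (t : ℕ) :
    let Pm := S.noncommProd P (fun a _ b _ _ => hcomm a b)
    (((((((m : ℝ) - k) / m) ^ t / D : ℝ)) : ℂ) • Pm
      - Pm * ((Mcont P)^[t] (((1 : ℂ) / D) • 1)) * Pm).PosSemidef :=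
  suppression_of_continuation_terms_general D m P hherm hidem hcomm S k hk t
end

section
/- (CP-map identity (i).) Let Π₁, …, Π_m be mutually commuting projectors on ℂ^D, let S ⊆ {1,…,m} with |S| = k ≥ 1, and let P = ∏_{i∈S} Πᵢ. Define M_cont(ρ) = (1/m) Σ_{i=1}^{m} (I−Πᵢ) ρ (I−Πᵢ). Then for every integer T ≥ 0, (1/m) · Σ_{t=0}^{T} P · M_cont^t(I/D) · P ≤ (1/k) · (1/D) P in the Loewner order. -/
open scoped ComplexOrder

/-! Every `Πᵢ` commutes with `I/D`, and on matrices commuting with all `Πᵢ` the map `M_cont`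
is left multiplication by `A = M_cont(I) = (1/m) Σᵢ (I − Πᵢ)`; hence
`P M_contᵗ(I/D) P = (1/D) P Aᵗ P = (1/D) P (AP)ᵗ P`. Since `(I − Πᵢ) P = 0` for `i ∈ S` and the
other `(I − Πᵢ) P` are projectors, `0 ≤ AP ≤ (1 − k/m) I`. The continuous functional calculus
then bounds the geometric sum `Σₜ (AP)ᵗ` by `(m/k) I`, and conjugating by `P` gives the claim. -/

open Finset
open scoped MatrixOrder

theorem IsIdempotentElem.mul_noncommProd_of_mem {M ι : Type*} [Monoid M] [DecidableEq ι]
    {p : ι → M} {i : ι} (hpi : IsIdempotentElem (p i)) {s : Finset ι} (hi : i ∈ s) (comm) :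
    p i * s.noncommProd p comm = s.noncommProd p comm := by
  rw [← mul_noncommProd_erase s hi p comm, ← mul_assoc, hpi.eq]

section StarOrderedRing

variable {R : Type*} [Ring R] [StarRing R]

theorem IsStarProjection.noncommProd {ι : Type*} {p : ι → R}
    (hp : ∀ i, IsStarProjection (p i)) (s : Finset ι) (comm) :
    IsStarProjection (s.noncommProd p comm) := by
  classical
  induction s using Finset.induction_on with
  | empty => rw [noncommProd_empty]; exact .one _
  | insert a s ha ih =>
    rw [noncommProd_insert_of_notMem _ _ _ _ ha]
    exact (hp a).mul (ih _) <| noncommProd_commute _ _ _ _ fun i hi =>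
      comm (mem_insert_self a s) (mem_insert_of_mem hi) (ne_of_mem_of_not_mem hi ha).symm

theorem IsStarProjection.one_sub_mul {p e : R} (hp : IsStarProjection p) (he : IsStarProjection e)
    (hpe : Commute p e) : IsStarProjection ((1 - p) * e) :=
  hp.one_sub.mul he ((Commute.one_left e).sub_left hpe)

variable [PartialOrder R] [StarOrderedRing R]

theorem sum_one_sub_mul_le_card_compl {ι : Type*} [Fintype ι] [DecidableEq ι] {p : ι → R}
    (hp : ∀ i, IsStarProjection (p i)) {e : R} (he : IsStarProjection e)
    (hpe : ∀ i, Commute (p i) e) {s : Finset ι} (hs : ∀ i ∈ s, p i * e = e) :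
    ∑ i, (1 - p i) * e ≤ (sᶜ.card : R) := by
  have hvanish : ∀ i ∈ univ, i ∉ sᶜ → (1 - p i) * e = 0 := fun i _ hi => by
    rw [sub_mul, one_mul, hs i (by simpa using hi), sub_self]
  rw [← sum_subset (subset_univ sᶜ) hvanish, ← nsmul_one, ← sum_const]
  exact sum_le_sum fun i _ => ((hp i).one_sub_mul he (hpe i)).le_one

variable [Algebra ℝ R] [TopologicalSpace R] [ContinuousFunctionalCalculus ℝ R IsSelfAdjoint]
  [NonnegSpectrumClass ℝ R]

theorem geom_sum_le_algebraMap_of_le {a : R} (ha : 0 ≤ a) {c : ℝ} (hc : c < 1)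
    (hac : a ≤ algebraMap ℝ R c) (n : ℕ) :
    ∑ t ∈ range n, a ^ t ≤ algebraMap ℝ R (1 - c)⁻¹ := by
  have hsum : cfc (fun x : ℝ => ∑ t ∈ range n, x ^ t) a = ∑ t ∈ range n, a ^ t := by
    rw [← Finset.sum_fn, cfc_sum _ a _ fun t _ => (continuous_pow t).continuousOn]
    exact sum_congr rfl fun t _ => cfc_pow_id a t
  rw [← hsum]
  refine cfc_le_algebraMap _ _ a fun x hx => ?_
  have hx0 : 0 ≤ x := spectrum_nonneg_of_nonneg ha hx
  have hxc : x ≤ c := (le_algebraMap_iff_spectrum_le (R := ℝ)).mp hac x hx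
  calc ∑ t ∈ range n, x ^ t ≤ (1 - x)⁻¹ := by
        simpa using geom_sum_Ico_le_of_lt_one (m := 0) (n := n) hx0 (hxc.trans_lt hc)
    _ ≤ (1 - c)⁻¹ := by gcongr

theorem IsStarProjection.sum_mul_pow_mul_le {e a : R} (he : IsStarProjection e)
    (hae : Commute a e) (h0 : 0 ≤ a * e) {c : ℝ} (hc : c < 1)
    (hc' : a * e ≤ algebraMap ℝ R c) (n : ℕ) : ∑ t ∈ range n, e * a ^ t * e ≤ (1 - c)⁻¹ • e := by
  have hpow : ∀ t, e * (a * e) ^ t * e = e * a ^ t * e := fun t => by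
    rw [hae.mul_pow, mul_assoc, mul_assoc, ← pow_succ, he.pow_succ_eq, ← mul_assoc]
  calc ∑ t ∈ range n, e * a ^ t * e = e * (∑ t ∈ range n, (a * e) ^ t) * e := by
        simp only [mul_sum, sum_mul, hpow]
    _ ≤ e * algebraMap ℝ R (1 - c)⁻¹ * e :=
        he.isSelfAdjoint.conjugate_le_conjugate (geom_sum_le_algebraMap_of_le h0 hc hc' n)
    _ = (1 - c)⁻¹ • e := by
        rw [Algebra.algebraMap_eq_smul_one, mul_smul_one, smul_mul_assoc, he.isIdempotentElem.eq]

end StarOrderedRing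

theorem one_div_natCast_smul {E : Type*} [AddCommGroup E] [Module ℂ E] (n : ℕ) (x : E) :
    ((1 : ℂ) / n) • x = (n : ℝ)⁻¹ • x := by
  rw [one_div, ← Complex.ofReal_natCast, ← Complex.ofReal_inv, Complex.coe_smul]

section Mcont

variable {D m : ℕ} {P : Fin m → Matrix (Fin D) (Fin D) ℂ}

theorem commute_Mcont_one {X : Matrix (Fin D) (Fin D) ℂ} (hX : ∀ i, Commute X (P i)) :
    Commute X (Mcont P 1) := by
  have h : ∀ i, Commute X (1 - P i) := fun i => (Commute.one_right X).sub_right (hX i)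
  exact .smul_right (.sum_right _ _ _ fun i _ => ((h i).mul_right (.one_right _)).mul_right (h i)) _

theorem Mcont_eq_Mcont_one_mul {X : Matrix (Fin D) (Fin D) ℂ} (hX : ∀ i, Commute X (P i)) :
    Mcont P X = Mcont P 1 * X := by
  simp only [Mcont, smul_mul_assoc, sum_mul, mul_one]
  congr 1
  refine sum_congr rfl fun i _ => ?_
  rw [mul_assoc, ((Commute.one_right X).sub_right (hX i)).eq, ← mul_assoc]

theorem Mcont_iterate_smul_one (hcomm : ∀ i j, Commute (P i) (P j)) (c : ℂ) (t : ℕ) :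
    (Mcont P)^[t] (c • 1) = c • Mcont P 1 ^ t := by
  induction t with
  | zero => simp
  | succ t ih =>
    have hX : ∀ i, Commute (c • Mcont P 1 ^ t) (P i) := fun i =>
      ((commute_Mcont_one (hcomm i)).pow_right t).symm.smul_left c
    rw [Function.iterate_succ_apply', ih, Mcont_eq_Mcont_one_mul hX, mul_smul_comm, pow_succ']

theorem Mcont_one_mul_eq_sum (hP : ∀ i, IsStarProjection (P i)) (X : Matrix (Fin D) (Fin D) ℂ) :
    Mcont P 1 * X = (m : ℝ)⁻¹ • ∑ i, (1 - P i) * X := by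
  simp only [Mcont, mul_one, fun i => (hP i).isIdempotentElem.one_sub.eq, smul_mul_assoc, sum_mul]
  exact one_div_natCast_smul m _

theorem Mcont_one_mul_nonneg {e : Matrix (Fin D) (Fin D) ℂ} (hP : ∀ i, IsStarProjection (P i))
    (he : IsStarProjection e) (hPe : ∀ i, Commute (P i) e) : 0 ≤ Mcont P 1 * e := by
  rw [Mcont_one_mul_eq_sum hP]
  exact smul_nonneg (by positivity) (sum_nonneg fun i _ => ((hP i).one_sub_mul he (hPe i)).nonneg)

theorem Mcont_one_mul_le {e : Matrix (Fin D) (Fin D) ℂ} (hP : ∀ i, IsStarProjection (P i))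
    (he : IsStarProjection e) (hPe : ∀ i, Commute (P i) e) {S : Finset (Fin m)}
    (hS : ∀ i ∈ S, P i * e = e) :
    Mcont P 1 * e ≤ algebraMap ℝ _ ((m - #S) / m) := by
  calc Mcont P 1 * e ≤ (m : ℝ)⁻¹ • ((#Sᶜ : ℕ) : Matrix (Fin D) (Fin D) ℂ) := by
        rw [Mcont_one_mul_eq_sum hP]
        exact smul_le_smul_of_nonneg_left (sum_one_sub_mul_le_card_compl hP he hPe hS)
          (by positivity)
    _ = algebraMap ℝ _ ((m - #S) / m) := by
        rw [← map_natCast (algebraMap ℝ (Matrix (Fin D) (Fin D) ℂ)), Algebra.smul_def,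
          ← map_mul, card_compl, Fintype.card_fin,
          Nat.cast_sub ((card_le_univ S).trans_eq (Fintype.card_fin m)), inv_mul_eq_div]

end Mcont

/-- **CP-map identity (i).**
`(1/m) Σ_{t=0}^{T} P M_contᵗ(I/D) P ≤ (1/k)(1/D) P`, where `P = ∏_{i∈S} Πᵢ`. -/
theorem cp_map_identity_i
    (D m : ℕ)
    (P : Fin m → Matrix (Fin D) (Fin D) ℂ)
    (hherm : ∀ i, (P i).IsHermitian)
    (hidem : ∀ i, P i * P i = P i)
    (hcomm : ∀ i j, Commute (P i) (P j))
    (S : Finset (Fin m)) (k : ℕ) (hk : S.card = k) (hk1 : 1 ≤ k)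
    (T : ℕ) :
    let Pm := S.noncommProd P (fun a _ b _ _ => hcomm a b)
    ((((1 / ((k : ℝ) * D) : ℝ)) : ℂ) • Pm
      - ((1 : ℂ) / m) • ∑ t ∈ Finset.range (T + 1),
          Pm * ((Mcont P)^[t] (((1 : ℂ) / D) • 1)) * Pm).PosSemidef := by
  intro Q
  have hP : ∀ i, IsStarProjection (P i) := fun i => ⟨hidem i, (hherm i).isSelfAdjoint⟩
  have hQ : IsStarProjection Q := .noncommProd hP S _
  have hPQ : ∀ i, Commute (P i) Q := fun i => noncommProd_commute _ _ _ _ fun j _ => hcomm i j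
  have hk0 : (0 : ℝ) < k := by exact_mod_cast hk1
  have hkm : k ≤ m := hk ▸ (card_le_univ S).trans_eq (Fintype.card_fin m)
  have hm0 : (0 : ℝ) < m := by exact_mod_cast hk1.trans hkm
  have hgeom := hQ.sum_mul_pow_mul_le (commute_Mcont_one fun i => (hPQ i).symm).symm
    (Mcont_one_mul_nonneg hP hQ hPQ) (by rw [hk, div_lt_one hm0]; linarith)
    (Mcont_one_mul_le hP hQ hPQ fun i hi => (hP i).isIdempotentElem.mul_noncommProd_of_mem hi _)
    (T + 1)
  refine Matrix.le_iff.mp ?_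
  calc ((1 : ℂ) / m) • ∑ t ∈ range (T + 1), Q * (Mcont P)^[t] (((1 : ℂ) / D) • 1) * Q
      = ((m : ℝ)⁻¹ * (D : ℝ)⁻¹) • ∑ t ∈ range (T + 1), Q * Mcont P 1 ^ t * Q := by
        simp_rw [Mcont_iterate_smul_one hcomm, mul_smul_comm, smul_mul_assoc, ← smul_sum,
          one_div_natCast_smul, smul_smul]
    _ ≤ ((m : ℝ)⁻¹ * (D : ℝ)⁻¹) • ((1 - ((m : ℝ) - #S) / m)⁻¹ • Q) :=
        smul_le_smul_of_nonneg_left hgeom (by positivity)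
    _ = ((1 / ((k : ℝ) * D) : ℝ) : ℂ) • Q := by
        rw [smul_smul, Complex.coe_smul, hk]
        congr 1
        field_simp [hk0.ne']
        ring
end

section
/- (Exponential decay of the continuation map onto excited states.) Let Π₁, …, Π_m be projectors on ℂ^D, let H = (1/m) Σ_{i=1}^{m} Πᵢ, let G be the orthogonal projection onto the kernel of H, and suppose δ > 0 is a real number with H ≥ δ·(I − G) in the Loewner order. Define M(ρ) = (1/m) Σ_{i=1}^{m} (I−Πᵢ) ρ (I−Πᵢ). Then for every integer t ≥ 0, M^t(I) ≤ G + (1−δ)ᵗ (I − G) in the Loewner order. -/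
open scoped ComplexOrder

/-!
Every `Πᵢ` annihilates the range of `G`: the `Πᵢ` are positive and average to `H`, which kills
that range. Hence `M` maps `G` to (at most) `G` and `Q = I - G` to `Q - H ≤ (1 - δ) Q`. Since `M`
is linear and monotone in the Loewner order, induction on `t` gives
`Mᵗ(G + Q) ≤ G + (1 - δ)ᵗ Q`; if `δ > 1`, positivity of `M(Q)` forces `Q = 0`.
-/

open scoped MatrixOrder

section OrderedModule

variable {𝕜 E : Type*}

theorem LinearMap.iterate_add_le_add_pow_smul_of_nonneg [CommSemiring 𝕜] [PartialOrder 𝕜]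
    [IsOrderedRing 𝕜] [AddCommMonoid E] [PartialOrder E] [IsOrderedAddMonoid E] [Module 𝕜 E]
    [PosSMulMono 𝕜 E] {M : E →ₗ[𝕜] E} (hM : Monotone M) {g q : E} {c : 𝕜}
    (hg : M g ≤ g) (hq : M q ≤ c • q) (hc : 0 ≤ c) (t : ℕ) :
    M^[t] (g + q) ≤ g + c ^ t • q := by
  induction t with
  | zero => simp
  | succ t ih =>
    calc M^[t + 1] (g + q) ≤ M (g + c ^ t • q) := by
          rw [Function.iterate_succ_apply']; exact hM ih
      _ = M g + c ^ t • M q := by rw [map_add, map_smul]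
      _ ≤ g + c ^ (t + 1) • q := by
          rw [pow_succ, mul_smul]
          exact add_le_add hg (smul_le_smul_of_nonneg_left hq (pow_nonneg hc t))

variable [Field 𝕜] [LinearOrder 𝕜] [IsStrictOrderedRing 𝕜] [AddCommGroup E] [PartialOrder E]
  [IsOrderedAddMonoid E] [Module 𝕜 E] [PosSMulMono 𝕜 E]

theorem eq_zero_of_le_smul_of_neg {x y : E} {c : 𝕜} (hx : 0 ≤ x) (hy : 0 ≤ y) (hyx : y ≤ c • x)
    (hc : c < 0) : x = 0 := by
  refine le_antisymm ?_ hx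
  have : (-c) • x ≤ 0 := by rw [neg_smul, neg_nonpos]; exact hy.trans hyx
  exact (smul_nonpos_iff_nonpos_of_pos_left (neg_pos.mpr hc)).mp this

theorem LinearMap.iterate_add_le_add_pow_smul {M : E →ₗ[𝕜] E} (hM : Monotone M) {g q : E}
    {c : 𝕜} (hg : M g ≤ g) (hq₀ : 0 ≤ q) (hq : M q ≤ c • q) (t : ℕ) :
    M^[t] (g + q) ≤ g + c ^ t • q := by
  rcases le_or_gt 0 c with hc | hc
  · exact iterate_add_le_add_pow_smul_of_nonneg hM hg hq hc t
  · obtain rfl : q = 0 :=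
      eq_zero_of_le_smul_of_neg hq₀ (by simpa using hM hq₀) hq hc
    simpa using iterate_add_le_add_pow_smul_of_nonneg hM hg (q := 0) (c := 0) (by simp) le_rfl t

end OrderedModule

-- For `m ≠ 0` this is an equality; for `m = 0` the left side is `0`, as `(1 : 𝕜) / 0 = 0`.
theorem one_div_natCast_smul_nsmul_le {𝕜 E : Type*} [DivisionSemiring 𝕜] [CharZero 𝕜]
    [AddCommMonoid E] [PartialOrder E] [Module 𝕜 E] (m : ℕ) {x : E} (hx : 0 ≤ x) :
    ((1 : 𝕜) / m) • (m • x) ≤ x := by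
  rcases eq_or_ne m 0 with rfl | hm
  · simpa using hx
  · rw [← Nat.cast_smul_eq_nsmul 𝕜, smul_smul, one_div_mul_cancel (by exact_mod_cast hm),
      one_smul]

theorem one_sub_mul_mul_one_sub_of_mul_eq_zero {R : Type*} [Ring R] {p x : R}
    (hpx : p * x = 0) (hxp : x * p = 0) : (1 - p) * x * (1 - p) = x := by
  rw [sub_mul, one_mul, hpx, sub_zero, mul_sub, mul_one, hxp, sub_zero]

namespace Matrix

variable {n : Type*} [Fintype n]

theorem mul_eq_zero_of_forall_mulVec_eq_self {R : Type*} [CommSemiring R] [DecidableEq n]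
    {a g : Matrix n n R} (hg : g * g = g) (h : ∀ v, g *ᵥ v = v → a *ᵥ v = 0) : a * g = 0 := by
  refine ext_of_mulVec_single fun j => ?_
  rw [← mulVec_mulVec, zero_mulVec]
  exact h _ (by rw [mulVec_mulVec, hg])

theorem mul_eq_zero_of_sum_mul_eq_zero {ι 𝕜 : Type*} [RCLike 𝕜] {s : Finset ι}
    {p : ι → Matrix n n 𝕜} (hp : ∀ i ∈ s, IsStarProjection (p i)) {g : Matrix n n 𝕜}
    (h : (∑ i ∈ s, p i) * g = 0) : ∀ i ∈ s, p i * g = 0 := by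
  have hconj : ∀ i ∈ s, gᴴ * p i * g = (p i * g)ᴴ * (p i * g) := fun i hi => by
    simp only [conjTranspose_mul, IsHermitian.eq (hp i hi).isSelfAdjoint, mul_assoc]
    rw [← mul_assoc (p i), (hp i hi).isIdempotentElem.eq]
  have hsum : ∑ i ∈ s, (p i * g)ᴴ * (p i * g) = 0 := by
    rw [← Finset.sum_congr rfl hconj, ← Finset.sum_mul, ← Finset.mul_sum, mul_assoc, h, mul_zero]
  intro i hi
  exact conjTranspose_mul_self_eq_zero.mp <| (Finset.sum_eq_zero_iff_of_nonneg fun j _ =>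
    star_mul_self_nonneg (p j * g)).mp hsum i hi

end Matrix

section Continuation

variable {D m : ℕ} {P : Fin m → Matrix (Fin D) (Fin D) ℂ} {G : Matrix (Fin D) (Fin D) ℂ}

noncomputable def projAvg (P : Fin m → Matrix (Fin D) (Fin D) ℂ) : Matrix (Fin D) (Fin D) ℂ :=
  ((1 : ℂ) / m) • ∑ i, P i

noncomputable def McontLinearMap (P : Fin m → Matrix (Fin D) (Fin D) ℂ) :
    Module.End ℂ (Matrix (Fin D) (Fin D) ℂ) where
  toFun := Mcont P
  map_add' X Y := by simp only [Mcont, mul_add, add_mul, Finset.sum_add_distrib, smul_add]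
  map_smul' c X := by
    simp only [Mcont, Matrix.mul_smul, Matrix.smul_mul, ← Finset.smul_sum, RingHom.id_apply]
    rw [smul_comm]

theorem Mcont_mono (hP : ∀ i, IsSelfAdjoint (P i)) : Monotone (Mcont P) := by
  intro X Y hXY
  refine smul_le_smul_of_nonneg_left (Finset.sum_le_sum fun i _ => ?_) (by positivity)
  have h := star_left_conjugate_le_conjugate hXY (1 - P i)
  rwa [((IsSelfAdjoint.one _).sub (hP i)).star_eq] at h

theorem Mcont_le_self_of_mul_eq_zero (hG : 0 ≤ G) (hPG : ∀ i, P i * G = 0)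
    (hGP : ∀ i, G * P i = 0) : Mcont P G ≤ G :=
  calc Mcont P G = ((1 : ℂ) / m) • (m • G) := by
        simp only [Mcont, one_sub_mul_mul_one_sub_of_mul_eq_zero (hPG _) (hGP _),
          Finset.sum_const, Finset.card_univ, Fintype.card_fin]
    _ ≤ G := one_div_natCast_smul_nsmul_le m hG

theorem Mcont_one_sub (hP : ∀ i, IsStarProjection (P i)) (hPG : ∀ i, P i * G = 0)
    (hGP : ∀ i, G * P i = 0) :
    Mcont P (1 - G) = ((1 : ℂ) / m) • (m • (1 - G)) - projAvg P := by
  have h (i : Fin m) : (1 - P i) * (1 - G) * (1 - P i) = (1 - G) - P i := by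
    rw [mul_sub (1 - P i), mul_one, sub_mul (1 - P i),
      one_sub_mul_mul_one_sub_of_mul_eq_zero (hPG i) (hGP i),
      (hP i).one_sub.isIdempotentElem.eq, sub_right_comm]
  simp only [Mcont, projAvg, h, Finset.sum_sub_distrib, Finset.sum_const, Finset.card_univ,
    Fintype.card_fin, smul_sub]

theorem Mcont_one_sub_le_smul {δ : ℝ} (hP : ∀ i, IsStarProjection (P i))
    (hG : IsStarProjection G) (hPG : ∀ i, P i * G = 0) (hGP : ∀ i, G * P i = 0)
    (hgap : δ • (1 - G) ≤ projAvg P) : Mcont P (1 - G) ≤ (1 - δ) • (1 - G) :=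
  calc Mcont P (1 - G) ≤ (1 - G) - projAvg P := by
        rw [Mcont_one_sub hP hPG hGP]
        exact sub_le_sub_right (one_div_natCast_smul_nsmul_le m hG.one_sub.nonneg) _
    _ ≤ (1 - δ) • (1 - G) := by
        rw [sub_smul, one_smul]
        exact sub_le_sub_left hgap _

theorem mul_eq_zero_of_projAvg_mul_eq_zero (hP : ∀ i, IsStarProjection (P i))
    (h : projAvg P * G = 0) (i : Fin m) : P i * G = 0 := by
  have hm : (m : ℂ) ≠ 0 := by exact_mod_cast i.pos.ne'
  have hsum : (∑ j, P j) * G = 0 := by simpa [projAvg, smul_mul_assoc, hm] using h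
  exact Matrix.mul_eq_zero_of_sum_mul_eq_zero (fun j _ => hP j) hsum i (Finset.mem_univ i)

end Continuation

theorem continuation_map_exponential_decay_general
    (D m : ℕ)
    (P : Fin m → Matrix (Fin D) (Fin D) ℂ)
    (hherm : ∀ i, (P i).IsHermitian)
    (hidem : ∀ i, P i * P i = P i)
    (G : Matrix (Fin D) (Fin D) ℂ)
    (hGherm : G.IsHermitian) (hGidem : G * G = G)
    (hGker : ∀ v : Fin D → ℂ,
      (((1 : ℂ) / m) • ∑ i, P i).mulVec v = 0 ↔ G.mulVec v = v)
    (δ : ℝ)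
    (hgap : ((((1 : ℂ) / m) • ∑ i, P i) - (δ : ℂ) • (1 - G)).PosSemidef)
    (t : ℕ) :
    (G + (((1 - δ) ^ t : ℝ) : ℂ) • (1 - G) - (Mcont P)^[t] 1).PosSemidef := by
  have hP (i : Fin m) : IsStarProjection (P i) := ⟨hidem i, hherm i⟩
  have hG : IsStarProjection G := ⟨hGidem, hGherm⟩
  have hPG : ∀ i, P i * G = 0 := mul_eq_zero_of_projAvg_mul_eq_zero hP <|
    Matrix.mul_eq_zero_of_forall_mulVec_eq_self hGidem fun v => (hGker v).mpr
  have hGP (i : Fin m) : G * P i = 0 :=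
    ((hP i).isSelfAdjoint.commute_of_mul_eq_zero hG.isSelfAdjoint (hPG i)).eq ▸ hPG i
  have hgap' : δ • (1 - G) ≤ projAvg P := by rwa [← Complex.coe_smul]
  suffices (Mcont P)^[t] (G + (1 - G)) ≤ G + (1 - δ) ^ t • (1 - G) by
    rwa [add_sub_cancel, ← Complex.coe_smul] at this
  exact ((McontLinearMap P).restrictScalars ℝ).iterate_add_le_add_pow_smul
    (Mcont_mono fun i => (hP i).isSelfAdjoint) (Mcont_le_self_of_mul_eq_zero hG.nonneg hPG hGP)
    hG.one_sub.nonneg (Mcont_one_sub_le_smul hP hG hPG hGP hgap') t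

/-- **Exponential decay of the continuation map onto excited states.**
With `H = (1/m) Σᵢ Πᵢ`, `G` the orthogonal projection onto `ker H`, and
spectral gap `H ≥ δ(I−G)`, we have `Mᵗ(I) ≤ G + (1−δ)ᵗ (I−G)`. -/
theorem continuation_map_exponential_decay
    (D m : ℕ)
    (P : Fin m → Matrix (Fin D) (Fin D) ℂ)
    (hherm : ∀ i, (P i).IsHermitian)
    (hidem : ∀ i, P i * P i = P i)
    (G : Matrix (Fin D) (Fin D) ℂ)
    (hGherm : G.IsHermitian) (hGidem : G * G = G)
    (hGker : ∀ v : Fin D → ℂ,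
      (((1 : ℂ) / m) • ∑ i, P i).mulVec v = 0 ↔ G.mulVec v = v)
    (δ : ℝ) (hδ : 0 < δ)
    (hgap : ((((1 : ℂ) / m) • ∑ i, P i) - (δ : ℂ) • (1 - G)).PosSemidef)
    (t : ℕ) :
    (G + (((1 - δ) ^ t : ℝ) : ℂ) • (1 - G) - (Mcont P)^[t] 1).PosSemidef :=
  continuation_map_exponential_decay_general D m P hherm hidem G hGherm hGidem hGker δ hgap t
end

section
/- (Proposition on the first violation with spectral gap, non-commuting case.) Let Π₁, …, Π_m be projectors on ℂ^D, let H = (1/m) Σ_{i=1}^{m} Πᵢ, let G be the orthogonal projection onto the kernel of H, and suppose δ > 0 is a real number with H ≥ δ·(I − G) in the Loewner order. Then for every index a ∈ {1,…,m} and every integer T ≥ 0, the positive semidefinite matrix (1/m) · Σ_{t=0}^{T} (1/mᵗ) · Σ_{(i₁,…,i_t) ∈ {1,…,m}ᵗ} Π_a (I−Π_{i_t}) ⋯ (I−Π_{i₁}) (I/D) (I−Π_{i₁}) ⋯ (I−Π_{i_t}) Π_a is ≤ (1/(mδ)) · (1/D) Π_a in the Loewner order; in particular its trace is at most rank(Π_a)/(mδD).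 -/
/-!
Let `Ψ X = (1/m) Σₖ (I - Πₖ) X (I - Πₖ)` (`avgComplConj`). Up to the factor `1/(mD)`, the level-`t`
term of the operator is `Π_a Ψᵗ(I) Π_a`. The map `Ψ` is positive, fixes `G` (each `Πₖ` vanishes on
`ker H`), and `(I - G) - Ψ (I - G) = H ≥ δ (I - G)`. Applying the positive maps `Ψᵗ` and telescoping,
`δ Σ_{t ≤ T} Ψᵗ (I - G) ≤ (I - G) - Ψ^{T+1} (I - G) ≤ I - G`. Since `Π_a G = 0`, conjugating by `Π_a`
gives `δ Π_a (Σ_{t ≤ T} Ψᵗ I) Π_a ≤ Π_a`, and the trace bound follows from `tr Π_a = rank Π_a`.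
-/

open scoped ComplexOrder

/-- The ordered product `(I−Π_{i_t})⋯(I−Π_{i₁})`. -/
noncomputable def chainRev {D m : ℕ} (P : Fin m → Matrix (Fin D) (Fin D) ℂ)
    (t : ℕ) (i : Fin t → Fin m) : Matrix (Fin D) (Fin D) ℂ :=
  ((List.finRange t).reverse.map (fun s => 1 - P (i s))).prod

/-- The ordered product `(I−Π_{i₁})⋯(I−Π_{i_t})`. -/
noncomputable def chainFwd {D m : ℕ} (P : Fin m → Matrix (Fin D) (Fin D) ℂ)
    (t : ℕ) (i : Fin t → Fin m) : Matrix (Fin D) (Fin D) ℂ :=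
  ((List.finRange t).map (fun s => 1 - P (i s))).prod

/-- The (unnormalised) operator
`(1/m) Σ_{t=0}^{T} (1/mᵗ) Σ_{i₁,…,i_t} Π_a (I−Π_{i_t})⋯(I−Π_{i₁}) (I/D) (I−Π_{i₁})⋯(I−Π_{i_t}) Π_a`. -/
noncomputable def haltMat {D m : ℕ} (P : Fin m → Matrix (Fin D) (Fin D) ℂ)
    (a : Fin m) (T : ℕ) : Matrix (Fin D) (Fin D) ℂ :=
  ((1 : ℂ) / m) • ∑ t ∈ Finset.range (T + 1),
    ((1 : ℂ) / (m : ℂ) ^ t) • ∑ i : Fin t → Fin m,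
      P a * chainRev P t i * (((1 : ℂ) / D) • 1) * chainFwd P t i * P a

open scoped MatrixOrder
open Matrix Finset

theorem Module.End.sum_range_pow_apply_le {R M : Type*} [Semiring R] [AddCommGroup M]
    [PartialOrder M] [IsOrderedAddMonoid M] [Module R M] {Ψ : Module.End R M} (hΨ : Monotone Ψ)
    {E F : M} (hE : 0 ≤ E) (hF : F ≤ E - Ψ E) (n : ℕ) :
    ∑ t ∈ range n, (Ψ ^ t) F ≤ E := by
  have hmono (t : ℕ) : Monotone ⇑(Ψ ^ t) := by
    rw [Module.End.coe_pow]
    exact hΨ.iterate t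
  calc ∑ t ∈ range n, (Ψ ^ t) F
      ≤ ∑ t ∈ range n, ((Ψ ^ t) E - (Ψ ^ (t + 1)) E) := by
        gcongr with t
        rw [pow_succ, Module.End.mul_apply, ← map_sub]
        exact hmono t hF
    _ = E - (Ψ ^ n) E := by
        rw [sum_range_sub' (fun t => (Ψ ^ t) E), pow_zero, Module.End.one_apply]
    _ ≤ E := sub_le_self E (by simpa using hmono n hE)

theorem Matrix.cast_rank_eq_trace_of_isIdempotentElem {n K : Type*} [Fintype n] [DecidableEq n]
    [Field K] {A : Matrix n n K} (hA : IsIdempotentElem A) : (A.rank : K) = A.trace := by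
  have h : IsIdempotentElem (toLin' A) := hA.map toLinAlgEquiv'
  rw [rank, ← toLin'_apply', ← (LinearMap.IsIdempotentElem.isProj_range _ h).trace,
    trace_toLin'_eq]

section PosSemidef

variable {n 𝕜 : Type*} [Fintype n] [RCLike 𝕜]

theorem Matrix.trace_mono {A B : Matrix n n 𝕜} (h : A ≤ B) : A.trace ≤ B.trace := by
  rw [← sub_nonneg, ← trace_sub]
  exact (sub_nonneg.mpr h).posSemidef.trace_nonneg

theorem Matrix.PosSemidef.mulVec_eq_zero_of_sum_mulVec_eq_zero {ι : Type*} [Fintype ι]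
    {A : ι → Matrix n n 𝕜} (hA : ∀ i, (A i).PosSemidef) {v : n → 𝕜}
    (hv : (∑ i, A i) *ᵥ v = 0) (i : ι) : A i *ᵥ v = 0 := by
  have hsum : ∑ j, star v ⬝ᵥ A j *ᵥ v = 0 := by
    simp_rw [← dotProduct_sum, ← sum_mulVec, hv, dotProduct_zero]
  rw [← (hA i).dotProduct_mulVec_zero_iff]
  exact (sum_eq_zero_iff_of_nonneg fun j _ => (hA j).dotProduct_mulVec_nonneg v).mp hsum i
    (mem_univ i)

theorem Matrix.PosSemidef.mul_eq_zero_of_sum_mul_eq_zero {ι : Type*} [Fintype ι]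
    {A : ι → Matrix n n 𝕜} (hA : ∀ i, (A i).PosSemidef) {G : Matrix n n 𝕜}
    (hG : (∑ i, A i) * G = 0) (i : ι) : A i * G = 0 := by
  rw [ext_iff_mulVec]
  intro v
  rw [← mulVec_mulVec, zero_mulVec]
  exact mulVec_eq_zero_of_sum_mulVec_eq_zero hA (by rw [mulVec_mulVec, hG, zero_mulVec]) i

theorem Matrix.mul_eq_zero_of_fixed_mulVec_eq_zero {H G : Matrix n n 𝕜} (hG : IsIdempotentElem G)
    (hfix : ∀ v, G *ᵥ v = v → H *ᵥ v = 0) : H * G = 0 := by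
  rw [ext_iff_mulVec]
  intro v
  rw [← mulVec_mulVec, zero_mulVec]
  exact hfix _ (by rw [mulVec_mulVec, hG.eq])

end PosSemidef

section AvgComplConj

variable {n 𝕜 : Type*} [Fintype n] [DecidableEq n] [RCLike 𝕜] {m : ℕ}

noncomputable def avgComplConj (P : Fin m → Matrix n n 𝕜) : Module.End 𝕜 (Matrix n n 𝕜) :=
  ((1 : 𝕜) / m) • ∑ k, LinearMap.mulLeft 𝕜 (1 - P k) ∘ₗ LinearMap.mulRight 𝕜 (1 - P k)

variable {P : Fin m → Matrix n n 𝕜}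

theorem avgComplConj_apply (X : Matrix n n 𝕜) :
    avgComplConj P X = ((1 : 𝕜) / m) • ∑ k, (1 - P k) * X * (1 - P k) := by
  simp [avgComplConj, Matrix.mul_assoc]

theorem avgComplConj_monotone (hP : ∀ k, IsSelfAdjoint (P k)) : Monotone (avgComplConj P) := by
  intro X Y hXY
  rw [avgComplConj_apply, avgComplConj_apply]
  refine smul_le_smul_of_nonneg_left (sum_le_sum fun k _ => ?_) (by positivity)
  simpa only [star_sub, star_one, (hP k).star_eq] using
    star_left_conjugate_le_conjugate hXY (1 - P k)

theorem avgComplConj_one (hm : m ≠ 0) (hP : ∀ k, IsIdempotentElem (P k)) :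
    avgComplConj P 1 = 1 - ((1 : 𝕜) / m) • ∑ k, P k := by
  have h (k : Fin m) : (1 - P k) * 1 * (1 - P k) = 1 - P k := by
    rw [Matrix.mul_one]
    exact (hP k).one_sub.eq
  simp only [avgComplConj_apply, h, sum_sub_distrib, sum_const, card_univ, Fintype.card_fin,
    smul_sub, ← Nat.cast_smul_eq_nsmul 𝕜, smul_smul]
  field_simp
  simp

theorem avgComplConj_eq_self (hm : m ≠ 0) (hP : ∀ k, IsSelfAdjoint (P k)) {G : Matrix n n 𝕜}
    (hG : IsSelfAdjoint G) (hPG : ∀ k, P k * G = 0) : avgComplConj P G = G := by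
  have h (k : Fin m) : (1 - P k) * G * (1 - P k) = G := by
    have hGP : G * P k = 0 := ((hP k).commute_of_mul_eq_zero hG (hPG k)).eq.symm.trans (hPG k)
    simp [sub_mul, mul_sub, hPG k, hGP]
  simp only [avgComplConj_apply, h, sum_const, card_univ, Fintype.card_fin,
    ← Nat.cast_smul_eq_nsmul 𝕜, smul_smul]
  field_simp
  simp

variable (hm : m ≠ 0) (hP : ∀ k, IsStarProjection (P k)) {G : Matrix n n 𝕜}
  (hG : IsStarProjection G) (hPG : ∀ k, P k * G = 0) {δ : ℝ}
  (hgap : (δ : 𝕜) • (1 - G) ≤ ((1 : 𝕜) / m) • ∑ k, P k)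
include hm hP hG hPG hgap

theorem smul_sum_avgComplConj_pow_one_sub_le (N : ℕ) :
    (δ : 𝕜) • ∑ t ∈ range N, (avgComplConj P ^ t) (1 - G) ≤ 1 - G := by
  have hstep : (1 - G) - avgComplConj P (1 - G) = ((1 : 𝕜) / m) • ∑ k, P k := by
    rw [map_sub, avgComplConj_one hm fun k => (hP k).isIdempotentElem,
      avgComplConj_eq_self hm (fun k => (hP k).isSelfAdjoint) hG.isSelfAdjoint hPG]
    abel
  simp_rw [smul_sum, ← map_smul]
  exact Module.End.sum_range_pow_apply_le
    (avgComplConj_monotone fun k => (hP k).isSelfAdjoint) hG.one_sub_nonneg (hstep ▸ hgap) N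

theorem smul_conj_sum_avgComplConj_pow_one_le {Q : Matrix n n 𝕜} (hQ : IsStarProjection Q)
    (hQG : Q * G = 0) (N : ℕ) :
    (δ : 𝕜) • (Q * (∑ t ∈ range N, (avgComplConj P ^ t) 1) * Q) ≤ Q := by
  have hfix (t : ℕ) : (avgComplConj P ^ t) G = G := by
    rw [Module.End.pow_apply]
    exact Function.iterate_fixed
      (avgComplConj_eq_self hm (fun k => (hP k).isSelfAdjoint) hG.isSelfAdjoint hPG) t
  have hG_invisible : Q * (∑ t ∈ range N, (avgComplConj P ^ t) (1 - G)) * Q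
      = Q * (∑ t ∈ range N, (avgComplConj P ^ t) 1) * Q := by
    simp only [map_sub, hfix, sum_sub_distrib, sum_const, card_range, mul_sub,
      mul_smul_comm, hQG, smul_zero, sub_zero]
  calc (δ : 𝕜) • (Q * (∑ t ∈ range N, (avgComplConj P ^ t) 1) * Q)
      = star Q * ((δ : 𝕜) • ∑ t ∈ range N, (avgComplConj P ^ t) (1 - G)) * Q := by
        rw [hQ.isSelfAdjoint.star_eq, ← hG_invisible, mul_smul_comm, smul_mul_assoc]
    _ ≤ star Q * (1 - G) * Q := star_left_conjugate_le_conjugate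
        (smul_sum_avgComplConj_pow_one_sub_le hm hP hG hPG hgap N) Q
    _ = Q := by rw [hQ.isSelfAdjoint.star_eq, mul_sub, sub_mul, hQG, zero_mul, sub_zero, mul_one,
        hQ.isIdempotentElem.eq]

end AvgComplConj

section HaltMat

variable {D m : ℕ} (P : Fin m → Matrix (Fin D) (Fin D) ℂ)

theorem chainFwd_snoc (t : ℕ) (j : Fin t → Fin m) (k : Fin m) :
    chainFwd P (t + 1) (Fin.snoc j k) = chainFwd P t j * (1 - P k) := by
  rw [chainFwd, chainFwd, ← List.ofFn_eq_map, ← List.ofFn_eq_map, List.ofFn_succ',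
    List.prod_concat]
  simp

theorem chainRev_snoc (t : ℕ) (j : Fin t → Fin m) (k : Fin m) :
    chainRev P (t + 1) (Fin.snoc j k) = (1 - P k) * chainRev P t j := by
  rw [chainRev, chainRev, List.map_reverse, List.map_reverse, ← List.ofFn_eq_map,
    ← List.ofFn_eq_map, List.ofFn_succ', List.concat_eq_append, List.reverse_append]
  simp

theorem avgComplConj_pow_apply_one (t : ℕ) :
    (avgComplConj P ^ t) 1 =
      ((1 : ℂ) / (m : ℂ) ^ t) • ∑ i : Fin t → Fin m, chainRev P t i * chainFwd P t i := by
  induction t with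
  | zero => simp [chainRev, chainFwd]
  | succ t ih =>
    rw [pow_succ', Module.End.mul_apply, ih, map_smul, avgComplConj_apply, smul_smul,
      ← (Fin.snocEquiv fun _ => Fin m).sum_comp, Fintype.sum_prod_type]
    congr 1
    · rw [pow_succ, one_div_mul_one_div]
    · refine sum_congr rfl fun k _ => ?_
      rw [mul_sum, sum_mul]
      refine sum_congr rfl fun i _ => ?_
      rw [show (Fin.snocEquiv fun _ => Fin m) (k, i) = Fin.snoc i k from rfl, chainRev_snoc,
        chainFwd_snoc]
      simp only [Matrix.mul_assoc]

theorem haltMat_eq_smul_conj (a : Fin m) (T : ℕ) :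
    haltMat P a T = ((1 : ℂ) / (m * D)) •
      (P a * (∑ t ∈ range (T + 1), (avgComplConj P ^ t) 1) * P a) := by
  simp only [haltMat, avgComplConj_pow_apply_one, mul_sum, sum_mul, smul_sum, Matrix.mul_smul,
    Matrix.smul_mul, Matrix.mul_one, smul_smul, Matrix.mul_assoc]
  refine sum_congr rfl fun t _ => sum_congr rfl fun i _ => ?_
  congr 1
  ring

theorem haltMat_le (hm : m ≠ 0) (hP : ∀ k, IsStarProjection (P k)) {G : Matrix (Fin D) (Fin D) ℂ}
    (hG : IsStarProjection G) (hPG : ∀ k, P k * G = 0) {δ : ℝ} (hδ : 0 < δ)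
    (hgap : (δ : ℂ) • (1 - G) ≤ ((1 : ℂ) / m) • ∑ k, P k) (a : Fin m) (T : ℕ) :
    haltMat P a T ≤ ((1 / ((m : ℝ) * δ * D) : ℝ) : ℂ) • P a := by
  have hscalar : ((1 : ℂ) / (m * D)) = ((1 / ((m : ℝ) * δ * D) : ℝ) : ℂ) * δ := by
    push_cast
    field_simp
  rw [haltMat_eq_smul_conj, hscalar, mul_smul]
  exact smul_le_smul_of_nonneg_left
    (smul_conj_sum_avgComplConj_pow_one_le hm hP hG hPG hgap (hP a) (hPG a) (T + 1))
    (by positivity)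

end HaltMat

/-- **Proposition on the first violation with spectral gap, non-commuting
case.** With `H = (1/m) Σᵢ Πᵢ`, `G` the orthogonal projection onto `ker H`,
and spectral gap `H ≥ δ(I−G)`, the halting operator is `≤ (1/(mδ))(1/D) Π_a`. -/
theorem first_violation_bound_spectral_gap
    (D m : ℕ)
    (P : Fin m → Matrix (Fin D) (Fin D) ℂ)
    (hherm : ∀ i, (P i).IsHermitian)
    (hidem : ∀ i, P i * P i = P i)
    (G : Matrix (Fin D) (Fin D) ℂ)
    (hGherm : G.IsHermitian) (hGidem : G * G = G)
    (hGker : ∀ v : Fin D → ℂ,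
      (((1 : ℂ) / m) • ∑ i, P i).mulVec v = 0 ↔ G.mulVec v = v)
    (δ : ℝ) (hδ : 0 < δ)
    (hgap : ((((1 : ℂ) / m) • ∑ i, P i) - (δ : ℂ) • (1 - G)).PosSemidef)
    (a : Fin m) (T : ℕ) :
    (((1 / ((m : ℝ) * δ * D) : ℝ) : ℂ) • P a - haltMat P a T).PosSemidef ∧
    (haltMat P a T).trace.re ≤ ((P a).rank : ℝ) / ((m : ℝ) * δ * D) := by
  have hm : m ≠ 0 := a.pos.ne'
  have hP (i : Fin m) : IsStarProjection (P i) := ⟨hidem i, hherm i⟩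
  have hG : IsStarProjection G := ⟨hGidem, hGherm⟩
  have hPG (i : Fin m) : P i * G = 0 := by
    have hHG := mul_eq_zero_of_fixed_mulVec_eq_zero hG.isIdempotentElem
      fun v => (hGker v).mpr
    rw [smul_sum] at hHG
    have := PosSemidef.mul_eq_zero_of_sum_mul_eq_zero
      (fun i => (hP i).nonneg.posSemidef.smul (by positivity)) hHG i
    simpa [hm] using this
  have hle := haltMat_le P hm hP hG hPG hδ hgap a T
  refine ⟨hle, ?_⟩
  have htr := (Complex.le_def.mp (trace_mono hle)).1
  rwa [trace_smul, ← cast_rank_eq_trace_of_isIdempotentElem (hidem a), smul_eq_mul,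
    Complex.re_ofReal_mul, Complex.natCast_re, one_div_mul_eq_div] at htr
end
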